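/- Along the parametrized curve of critical values (h₂(t), Δh(t)) = (σ/(2c²))·((t−2λ)(3t−2λ), (t−2λ)t²): at t = 0 the curve meets the line Δh = 0 tangentially at (2σλ²/c², 0); at t = 4λ/3 the curve has a cusp (both derivatives h₂'(t) and Δh'(t) vanish) at −(2σ/(27c²))(9λ², 8λ³); and at t = 2λ the curve crosses the line Δh = 0 transversely at the origin (Δh'(2λ) ≠ 0 when λ ≠ 0). -/

import Mathlib

noncomputable section

/-- h₂ component of the curve of critical values. -/
def h2c (σ c lam : ℝ) (t : ℝ) : ℝ := σ / (2 * c ^ 2) * ((t - 2 * lam) * (3 * t - 2 * lam))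

/-- Δh component of the curve of critical values. -/
def dhc (σ c lam : ℝ) (t : ℝ) : ℝ := σ / (2 * c ^ 2) * ((t - 2 * lam) * t ^ 2)

section Derivatives

variable (σ c lam t : ℝ)

theorem hasDerivAt_h2c :
    HasDerivAt (h2c σ c lam) (σ / (2 * c ^ 2) * (6 * t - 8 * lam)) t := by
  have hprod := ((hasDerivAt_id t).sub_const (2 * lam)).mul
    (((hasDerivAt_id t).const_mul 3).sub_const (2 * lam))
  exact (hprod.const_mul (σ / (2 * c ^ 2))).congr_deriv (by simp only [id]; ring)

theorem hasDerivAt_dhc :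
    HasDerivAt (dhc σ c lam) (σ / (2 * c ^ 2) * (3 * t ^ 2 - 4 * lam * t)) t := by
  have hprod := ((hasDerivAt_id t).sub_const (2 * lam)).mul ((hasDerivAt_id t).pow 2)
  exact (hprod.const_mul (σ / (2 * c ^ 2))).congr_deriv (by simp only [id, Pi.pow_apply]; ring)

theorem deriv_h2c : deriv (h2c σ c lam) t = σ / (2 * c ^ 2) * (6 * t - 8 * lam) :=
  (hasDerivAt_h2c σ c lam t).deriv

theorem deriv_dhc : deriv (dhc σ c lam) t = σ / (2 * c ^ 2) * (3 * t ^ 2 - 4 * lam * t) :=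
  (hasDerivAt_dhc σ c lam t).deriv

end Derivatives

theorem deriv_dhc_two_mul {σ c : ℝ} (hc : c ≠ 0) (lam : ℝ) :
    deriv (dhc σ c lam) (2 * lam) = 2 * σ * lam ^ 2 / c ^ 2 := by
  rw [deriv_dhc]
  field_simp
  ring

/-- At t = 0 the critical-value curve meets the line Δh = 0 tangentially at (2σλ²/c², 0);
at t = 4λ/3 it has a cusp at −(2σ/(27c²))(9λ², 8λ³); at t = 2λ it crosses Δh = 0
transversely at the origin. -/
theorem stmt10 (σ c lam : ℝ) (hσ : σ = 1 ∨ σ = -1) (hc : 0 < c) (hlam : lam ≠ 0) :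
    h2c σ c lam 0 = 2 * σ * lam ^ 2 / c ^ 2 ∧
    dhc σ c lam 0 = 0 ∧
    deriv (dhc σ c lam) 0 = 0 ∧
    h2c σ c lam (4 * lam / 3) = -(2 * σ / (27 * c ^ 2)) * (9 * lam ^ 2) ∧
    dhc σ c lam (4 * lam / 3) = -(2 * σ / (27 * c ^ 2)) * (8 * lam ^ 3) ∧
    deriv (h2c σ c lam) (4 * lam / 3) = 0 ∧
    deriv (dhc σ c lam) (4 * lam / 3) = 0 ∧
    h2c σ c lam (2 * lam) = 0 ∧
    dhc σ c lam (2 * lam) = 0 ∧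
    deriv (dhc σ c lam) (2 * lam) ≠ 0 := by
  have hσ0 : σ ≠ 0 := by rcases hσ with rfl | rfl <;> norm_num
  have htransverse : deriv (dhc σ c lam) (2 * lam) ≠ 0 := by
    rw [deriv_dhc_two_mul hc.ne']
    positivity
  refine ⟨?_, ?_, ?_, ?_, ?_, ?_, ?_, ?_, ?_, htransverse⟩ <;>
    simp only [h2c, dhc, deriv_h2c, deriv_dhc] <;> field_simp <;> ring
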